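/- arXiv:2503.10345 — 5 statements merged into one kernel-verified Lean document; each statement's English description precedes it below -/
import Mathlib

section
/- Under the IM-OCP dynamics, for every t > 1 the iterate satisfies r_t ∈ [ −α·ϖ_t/μ , B + (1−α)·ϖ_t/μ ], where ϖ_t = max_{1 ≤ i ≤ t−1} η_i/p_i. -/
set_option maxHeartbeats 2000000 in
/-- One-step boundedness lemma for IM-OCP. -/
lemma imocp_step (B α μ s x y e o ηt pt w w' : ℝ)
    (hB : 0 ≤ B) (hα0 : 0 ≤ α) (hα1 : α ≤ 1) (hμ : 0 < μ)
    (hs0 : 0 ≤ s) (hsB : s ≤ B)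
    (hη : 0 < ηt) (hp0 : 0 < pt)
    (ho0 : 0 ≤ o) (ho1 : o ≤ 1)
    (he : e = if s > x then 1 else 0)
    (hsc : (-(ηt * (α - e) * o / pt)) * (y - x) ≥ μ * (y - x) ^ 2)
    (hx1 : -(α * w / μ) ≤ x) (hx2 : x ≤ B + (1 - α) * w / μ)
    (hw : 0 ≤ w) (hww : w ≤ w') (hηp : ηt / pt ≤ w') :
    -(α * w' / μ) ≤ y ∧ y ≤ B + (1 - α) * w' / μ := by
  have hw' : 0 ≤ w' := le_trans hw hww
  have hηpt : 0 < ηt / pt := div_pos hη hp0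
  by_cases hcase : s > x
  · -- e = 1, gradient pushes up
    rw [if_pos hcase] at he
    subst he
    set c : ℝ := ηt * (α - 1) * o / pt with hc
    have hcnp : c ≤ 0 := by
      have h0 : ηt * (α - 1) * o ≤ 0 := by nlinarith [mul_nonneg hη.le ho0]
      exact div_nonpos_of_nonpos_of_nonneg h0 hp0.le
    have hd : 0 ≤ y - x := by
      by_contra hcon
      push_neg at hcon
      nlinarith [mul_nonneg (neg_nonneg.mpr hcnp) (neg_nonneg.mpr hcon.le),
        mul_pos hμ (mul_pos_of_neg_of_neg hcon hcon)]
    have hcb : -c ≤ (1 - α) * w' := by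
      have h1 : -c = (1 - α) * o * (ηt / pt) := by rw [hc]; ring
      rw [h1]
      have h2 : (1 - α) * o ≤ (1 - α) * 1 := by nlinarith
      nlinarith
    have hub : μ * (y - x) ≤ (1 - α) * w' := by
      rcases eq_or_lt_of_le hd with h | h
      · rw [← h, mul_zero]; exact mul_nonneg (by linarith) hw'
      · have := hsc
        have h2 : μ * (y - x) * (y - x) ≤ (-c) * (y - x) := by nlinarith
        have := le_of_mul_le_mul_right (by nlinarith : μ * (y - x) * (y - x) ≤ ((1 - α) * w') * (y - x)) h
        linarith
    constructor
    · -- y ≥ x ≥ lower bound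
      have h2 : α * w / μ ≤ α * w' / μ := by gcongr
      linarith
    · -- μ*y ≤ μ*B + (1-α)*w'
      have hxB : x ≤ B := lt_of_lt_of_le hcase hsB |>.le
      have key : μ * y ≤ μ * (B + (1 - α) * w' / μ) := by
        have : μ * (B + (1 - α) * w' / μ) = μ * B + (1 - α) * w' := by
          field_simp
        rw [this]
        nlinarith
      exact le_of_mul_le_mul_left key hμ
  · -- e = 0, gradient pushes down
    rw [if_neg hcase] at he
    subst he
    push_neg at hcase
    have hsc' : μ * (y - x) ^ 2 ≤ -(ηt * α * o / pt) * (y - x) := by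
      have hh : -(ηt * (α - 0) * o / pt) * (y - x) = -(ηt * α * o / pt) * (y - x) := by ring
      rw [hh] at hsc
      exact hsc
    have hcnn : 0 ≤ ηt * α * o / pt :=
      div_nonneg (mul_nonneg (mul_nonneg hη.le hα0) ho0) hp0.le
    have hd : y - x ≤ 0 := by
      by_contra hcon
      push_neg at hcon
      have h1 : -(ηt * α * o / pt) * (y - x) ≤ 0 :=
        mul_nonpos_of_nonpos_of_nonneg (neg_nonpos.mpr hcnn) hcon.le
      have h2 : 0 < μ * (y - x) ^ 2 := mul_pos hμ (pow_pos hcon 2)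
      linarith [hsc']
    have hcb : ηt * α * o / pt ≤ α * w' := by
      have h1 : ηt * α * o / pt = α * o * (ηt / pt) := by ring
      rw [h1]
      have h2 : α * o * (ηt / pt) ≤ α * (ηt / pt) := by
        nlinarith [mul_nonneg (mul_nonneg hα0 (by linarith : (0:ℝ) ≤ 1 - o)) hηpt.le]
      have h3 : α * (ηt / pt) ≤ α * w' := mul_le_mul_of_nonneg_left hηp hα0
      linarith
    have hlb : μ * (x - y) ≤ α * w' := by
      rcases eq_or_lt_of_le hd with h | h
      · have hxy : x - y = 0 := by linarith
        rw [hxy, mul_zero]; exact mul_nonneg hα0 hw'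
      · have h3 : 0 < x - y := by linarith
        have h2 : μ * (x - y) * (x - y) ≤ (ηt * α * o / pt) * (x - y) := by nlinarith [hsc']
        have h4 : (ηt * α * o / pt) * (x - y) ≤ (α * w') * (x - y) :=
          mul_le_mul_of_nonneg_right hcb h3.le
        have h5 := le_of_mul_le_mul_right (le_trans h2 h4) h3
        linarith
    constructor
    · have hx0 : 0 ≤ x := le_trans hs0 hcase
      have key : μ * (-(α * w' / μ)) ≤ μ * y := by
        have hh : μ * (-(α * w' / μ)) = -(α * w') := by field_simp
        rw [hh]
        linarith [mul_nonneg hμ.le hx0]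
      exact le_of_mul_le_mul_left key hμ
    · have h1 : (1 - α) * w / μ ≤ (1 - α) * w' / μ := by gcongr <;> linarith
      linarith

/-- Lemma 1 (boundedness of IM-OCP iterates): under the IM-OCP dynamics, for every `t > 1`
the iterate satisfies `r t ∈ [-α ϖ_t / μ, B + (1-α) ϖ_t / μ]`, where
`ϖ_t = max_{1 ≤ i ≤ t-1} η i / p i`. -/
theorem imocp_iterates_bounded
    (B α μ : ℝ) (hB : 0 < B) (hα : α ∈ Set.Icc (0 : ℝ) 1) (hμ : 0 < μ)
    (rstar η p obs : ℕ → ℝ)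
    (hrstar : ∀ t, rstar t ∈ Set.Icc 0 B)
    (hη : ∀ t, 0 < η t)
    (hp : ∀ t, p t ∈ Set.Ioc (0 : ℝ) 1)
    (hobs : ∀ t, obs t = 0 ∨ obs t = 1)
    (R R' : ℝ → ℝ)
    (hR : ∀ x, HasDerivAt R (R' x) x)
    (hbij : Function.Bijective R')
    (hsc : ∀ x y, (R' x - R' y) * (x - y) ≥ μ * (x - y) ^ 2)
    (r E : ℕ → ℝ)
    (hE : ∀ t, E t = if rstar t > r t then 1 else 0)
    (hr1 : r 1 ∈ Set.Icc 0 B)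
    (hupd : ∀ t, 1 ≤ t → R' (r (t + 1)) = R' (r t) - η t * (α - E t) * obs t / p t)
    (t : ℕ) (ht : 1 < t) :
    r t ∈ Set.Icc
      (-(α * ((Finset.Icc 1 (t - 1)).sup' (Finset.nonempty_Icc.mpr (by omega))
          fun i => η i / p i) / μ))
      (B + (1 - α) * ((Finset.Icc 1 (t - 1)).sup' (Finset.nonempty_Icc.mpr (by omega))
          fun i => η i / p i) / μ) := by
  obtain ⟨hα0, hα1⟩ := hα
  -- helpers about obs
  have hobs' : ∀ n, 0 ≤ obs n ∧ obs n ≤ 1 := by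
    intro n; rcases hobs n with h | h <;> rw [h] <;> constructor <;> norm_num
  -- the strong convexity inequality in update form
  have hstep : ∀ n, 1 ≤ n →
      (-(η n * (α - E n) * obs n / p n)) * (r (n+1) - r n) ≥ μ * (r (n+1) - r n) ^ 2 := by
    intro n hn
    have h1 := hsc (r (n+1)) (r n)
    have h2 := hupd n hn
    have h3 : R' (r (n+1)) - R' (r n) = -(η n * (α - E n) * obs n / p n) := by
      rw [h2]; ring
    rw [h3] at h1
    exact h1
  have key : ∀ n, ∀ hn : 2 ≤ n,
      -(α * ((Finset.Icc 1 (n - 1)).sup' (Finset.nonempty_Icc.mpr (by omega))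
          fun i => η i / p i) / μ) ≤ r n ∧
      r n ≤ B + (1 - α) * ((Finset.Icc 1 (n - 1)).sup' (Finset.nonempty_Icc.mpr (by omega))
          fun i => η i / p i) / μ := by
    intro n hn
    induction n, hn using Nat.le_induction with
    | base =>
      have hW2 : ((Finset.Icc 1 (2 - 1)).sup' (Finset.nonempty_Icc.mpr (by omega))
          fun i => η i / p i) = η 1 / p 1 := by
        norm_num
      rw [hW2]
      exact imocp_step B α μ (rstar 1) (r 1) (r 2) (E 1) (obs 1) (η 1) (p 1) 0 (η 1 / p 1)
        hB.le hα0 hα1 hμ (hrstar 1).1 (hrstar 1).2 (hη 1) (hp 1).1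
        (hobs' 1).1 (hobs' 1).2 (hE 1) (hstep 1 le_rfl)
        (by rw [mul_zero, zero_div, neg_zero]; exact hr1.1)
        (by rw [mul_zero, zero_div, add_zero]; exact hr1.2)
        le_rfl (le_of_lt (div_pos (hη 1) (hp 1).1)) le_rfl
    | succ n hn ih =>
      have hne1 : (Finset.Icc 1 (n - 1)).Nonempty := Finset.nonempty_Icc.mpr (by omega)
      have hne2 : (Finset.Icc 1 n).Nonempty := Finset.nonempty_Icc.mpr (by omega)
      have hsub : Finset.Icc 1 (n - 1) ⊆ Finset.Icc 1 n := by
        apply Finset.Icc_subset_Icc le_rfl; omega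
      have hmono : ((Finset.Icc 1 (n - 1)).sup' hne1 fun i => η i / p i)
          ≤ ((Finset.Icc 1 n).sup' hne2 fun i => η i / p i) :=
        Finset.sup'_mono _ hsub hne1
      have hmem : n ∈ Finset.Icc 1 n := Finset.mem_Icc.mpr ⟨by omega, le_rfl⟩
      have hlast : η n / p n ≤ ((Finset.Icc 1 n).sup' hne2 fun i => η i / p i) :=
        Finset.le_sup' (fun i => η i / p i) hmem
      have hWpos : 0 ≤ ((Finset.Icc 1 (n - 1)).sup' hne1 fun i => η i / p i) := by
        have h1 : (1 : ℕ) ∈ Finset.Icc 1 (n - 1) := Finset.mem_Icc.mpr ⟨le_rfl, by omega⟩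
        have := Finset.le_sup' (fun i => η i / p i) h1
        have hpos : 0 < η 1 / p 1 := div_pos (hη 1) (hp 1).1
        linarith
      have hW' : ((Finset.Icc 1 (n + 1 - 1)).sup' (Finset.nonempty_Icc.mpr (by omega))
          fun i => η i / p i) = ((Finset.Icc 1 n).sup' hne2 fun i => η i / p i) := by
        congr 1
      rw [hW']
      exact imocp_step B α μ (rstar n) (r n) (r (n+1)) (E n) (obs n) (η n) (p n)
        ((Finset.Icc 1 (n - 1)).sup' hne1 fun i => η i / p i)
        ((Finset.Icc 1 n).sup' hne2 fun i => η i / p i)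
        hB.le hα0 hα1 hμ (hrstar n).1 (hrstar n).2 (hη n) (hp n).1
        (hobs' n).1 (hobs' n).2 (hE n) (hstep n (by omega))
        ih.1 ih.2 hWpos hmono hlast
  obtain ⟨h1, h2⟩ := key t (by omega)
  exact ⟨h1, h2⟩
end

section
/- Under the IM-OCP dynamics, if additionally the step sizes η_t are nonincreasing and p_min = min_{1 ≤ t ≤ T} p_t, then every iterate r_t with 1 ≤ t ≤ T+1 lies in the interval [ −α·η_1/(μ·p_min) , B + (1−α)·η_1/(μ·p_min) ]; consequently |r_t − r_s| ≤ B + η_1/(μ·p_min) for all 1 ≤ s, t ≤ T+1. -/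
/-- Under the IM-OCP dynamics with nonincreasing step sizes, every iterate `r t` for
`1 ≤ t ≤ T+1` lies in `[-α η₁/(μ p_min), B + (1-α) η₁/(μ p_min)]`, where
`p_min = min_{1 ≤ t ≤ T} p t`; consequently `|r t - r s| ≤ B + η₁/(μ p_min)` for all
`1 ≤ s, t ≤ T+1`. -/
theorem imocp_iterates_uniformly_bounded
    (B α μ : ℝ) (hB : 0 < B) (hα : α ∈ Set.Icc (0 : ℝ) 1) (hμ : 0 < μ)
    (rstar η p obs : ℕ → ℝ)
    (hrstar : ∀ t, rstar t ∈ Set.Icc 0 B)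
    (hη : ∀ t, 0 < η t)
    (hηdec : ∀ t, η (t + 1) ≤ η t)
    (hp : ∀ t, p t ∈ Set.Ioc (0 : ℝ) 1)
    (hobs : ∀ t, obs t = 0 ∨ obs t = 1)
    (R R' : ℝ → ℝ)
    (hR : ∀ x, HasDerivAt R (R' x) x)
    (hbij : Function.Bijective R')
    (hsc : ∀ x y, (R' x - R' y) * (x - y) ≥ μ * (x - y) ^ 2)
    (r E : ℕ → ℝ)
    (hE : ∀ t, E t = if rstar t > r t then 1 else 0)
    (hr1 : r 1 ∈ Set.Icc 0 B)
    (hupd : ∀ t, 1 ≤ t → R' (r (t + 1)) = R' (r t) - η t * (α - E t) * obs t / p t)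
    (T : ℕ) (hT : 1 ≤ T) :
    (∀ t ∈ Finset.Icc 1 (T + 1),
      r t ∈ Set.Icc
        (-(α * η 1 / (μ * ((Finset.Icc 1 T).inf' (Finset.nonempty_Icc.mpr hT) p))))
        (B + (1 - α) * η 1 / (μ * ((Finset.Icc 1 T).inf' (Finset.nonempty_Icc.mpr hT) p)))) ∧
    (∀ s ∈ Finset.Icc 1 (T + 1), ∀ t ∈ Finset.Icc 1 (T + 1),
      |r t - r s| ≤ B + η 1 / (μ * ((Finset.Icc 1 T).inf' (Finset.nonempty_Icc.mpr hT) p))) := by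
  obtain ⟨hα0, hα1⟩ := hα
  set P := (Finset.Icc 1 T).inf' (Finset.nonempty_Icc.mpr hT) p with hPdef
  have hP0 : 0 < P := (Finset.lt_inf'_iff _).mpr (fun t _ => (hp t).1)
  have hPle : ∀ t, 1 ≤ t → t ≤ T → P ≤ p t := fun t h1 h2 =>
    Finset.inf'_le p (Finset.mem_Icc.mpr ⟨h1, h2⟩)
  have hμP : 0 < μ * P := mul_pos hμ hP0
  have hη1 : ∀ t, 1 ≤ t → η t ≤ η 1 := by
    intro t ht
    induction t with
    | zero => omega
    | succ n ih =>
      rcases Nat.eq_zero_or_pos n with h0 | h1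
      · subst h0; exact le_refl _
      · exact (hηdec n).trans (ih h1)
  have hmono : ∀ x y : ℝ, R' x ≤ R' y → x ≤ y := by
    intro x y h
    by_contra hxy
    push_neg at hxy
    have h2 : 0 < (x - y) ^ 2 := pow_pos (sub_pos.mpr hxy) 2
    nlinarith [hsc x y, mul_pos hμ h2]
  have hdist : ∀ x y : ℝ, x ≤ y → μ * (y - x) ≤ R' y - R' x := by
    intro x y hxy
    rcases eq_or_lt_of_le hxy with h | h
    · subst h; simp
    · have := hsc y x
      have hpos : 0 < y - x := sub_pos.mpr h
      nlinarith
  have hlo0 : -(α * η 1 / (μ * P)) ≤ 0 := by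
    have : 0 ≤ α * η 1 / (μ * P) := div_nonneg (mul_nonneg hα0 (hη 1).le) hμP.le
    linarith
  have hhiB : B ≤ B + (1 - α) * η 1 / (μ * P) := by
    have : 0 ≤ (1 - α) * η 1 / (μ * P) :=
      div_nonneg (mul_nonneg (by linarith) (hη 1).le) hμP.le
    linarith
  have key : ∀ t, 1 ≤ t → t ≤ T + 1 →
      -(α * η 1 / (μ * P)) ≤ r t ∧ r t ≤ B + (1 - α) * η 1 / (μ * P) := by
    intro t
    induction t with
    | zero => omega
    | succ n ih =>
      intro _ hn1
      rcases Nat.eq_zero_or_pos n with h0 | h1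
      · subst h0
        exact ⟨hlo0.trans hr1.1, hr1.2.trans hhiB⟩
      · have hnT : n ≤ T := by omega
        obtain ⟨ih1, ih2⟩ := ih h1 (by omega)
        have hupd' := hupd n h1
        rcases hobs n with ho | ho
        · have heq : R' (r (n + 1)) = R' (r n) := by rw [hupd', ho]; ring
          have : r (n + 1) = r n := hbij.injective heq
          rw [this]; exact ⟨ih1, ih2⟩
        · by_cases hEc : rstar n > r n
          · have hEn : E n = 1 := by rw [hE]; simp [hEc]
            have hg : R' (r (n + 1)) - R' (r n) = η n * (1 - α) / p n := by
              rw [hupd', hEn, ho]; ring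
            have hge : 0 ≤ η n * (1 - α) / p n :=
              div_nonneg (mul_nonneg (hη n).le (by linarith)) (hp n).1.le
            have hle : r n ≤ r (n + 1) := hmono _ _ (by linarith)
            have hd := hdist (r n) (r (n + 1)) hle
            have hb : η n * (1 - α) / p n ≤ η 1 * (1 - α) / P :=
              div_le_div₀ (mul_nonneg (hη 1).le (by linarith))
                (mul_le_mul_of_nonneg_right (hη1 n h1) (by linarith)) hP0 (hPle n h1 hnT)
            have hrB : r n ≤ B := le_trans hEc.le (hrstar n).2
            constructor
            · linarith
            · have hμd : μ * (r (n + 1) - r n) ≤ η 1 * (1 - α) / P := by linarith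
              have h5 : r (n + 1) - r n ≤ (η 1 * (1 - α) / P) / μ := by
                rw [le_div_iff₀ hμ]; nlinarith
              have hrw : B + (1 - α) * η 1 / (μ * P) = B + (η 1 * (1 - α) / P) / μ := by
                field_simp
              rw [hrw]; linarith
          · have hEn : E n = 0 := by rw [hE]; simp [hEc]
            have hg : R' (r n) - R' (r (n + 1)) = η n * α / p n := by
              rw [hupd', hEn, ho]; ring
            have hge : 0 ≤ η n * α / p n :=
              div_nonneg (mul_nonneg (hη n).le hα0) (hp n).1.le
            have hle : r (n + 1) ≤ r n := hmono _ _ (by linarith)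
            have hd := hdist (r (n + 1)) (r n) hle
            have hb : η n * α / p n ≤ η 1 * α / P :=
              div_le_div₀ (mul_nonneg (hη 1).le hα0)
                (mul_le_mul_of_nonneg_right (hη1 n h1) hα0) hP0 (hPle n h1 hnT)
            have hr0 : 0 ≤ r n := le_trans (hrstar n).1 (not_lt.mp hEc)
            constructor
            · have hμd : μ * (r n - r (n + 1)) ≤ η 1 * α / P := by linarith
              have h5 : r n - r (n + 1) ≤ (η 1 * α / P) / μ := by
                rw [le_div_iff₀ hμ]; nlinarith
              have hrw : -(α * η 1 / (μ * P)) = -((η 1 * α / P) / μ) := by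
                field_simp
              rw [hrw]; linarith
            · linarith
  have hsum : (1 - α) * η 1 / (μ * P) + α * η 1 / (μ * P) = η 1 / (μ * P) := by
    field_simp; ring
  refine ⟨fun t ht => ?_, fun s hs t ht => ?_⟩
  · rw [Finset.mem_Icc] at ht
    exact key t ht.1 ht.2
  · rw [Finset.mem_Icc] at hs ht
    obtain ⟨hs1, hs2⟩ := key s hs.1 hs.2
    obtain ⟨ht1, ht2⟩ := key t ht.1 ht.2
    rw [abs_le]
    constructor <;> linarith
end

section
/- Under the IM-OCP dynamics with nonincreasing step sizes η_t and with R' additionally L-Lipschitz, the importance-weighted miscoverage deviation satisfies, for every horizon T ≥ 1, | (1/T) · Σ_{t=1}^T (E_t − α)·obs_t/p_t | ≤ (1/(T·η_T)) · ( L·B + L·η_1/(μ·p_min) ), where p_min = min_{1 ≤ t ≤ T} p_t. This bound holds deterministically for every choice of the binary sequence obs_t. -/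
set_option maxHeartbeats 1600000 in
/-- Deterministic importance-weighted miscoverage bound for IM-OCP with nonincreasing step
sizes and `L`-Lipschitz mirror map `R'`:
`|(1/T) Σ_{t=1}^T (E t - α) obs t / p t| ≤ (1/(T η_T)) (L B + L η₁/(μ p_min))`. -/
theorem imocp_weighted_miscoverage_bound
    (B α μ L : ℝ) (hB : 0 < B) (hα : α ∈ Set.Icc (0 : ℝ) 1) (hμ : 0 < μ)
    (rstar η p obs : ℕ → ℝ)
    (hrstar : ∀ t, rstar t ∈ Set.Icc 0 B)
    (hη : ∀ t, 0 < η t)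
    (hηdec : ∀ t, η (t + 1) ≤ η t)
    (hp : ∀ t, p t ∈ Set.Ioc (0 : ℝ) 1)
    (hobs : ∀ t, obs t = 0 ∨ obs t = 1)
    (R R' : ℝ → ℝ)
    (hR : ∀ x, HasDerivAt R (R' x) x)
    (hbij : Function.Bijective R')
    (hsc : ∀ x y, (R' x - R' y) * (x - y) ≥ μ * (x - y) ^ 2)
    (hLip : ∀ x y, |R' x - R' y| ≤ L * |x - y|)
    (r E : ℕ → ℝ)
    (hE : ∀ t, E t = if rstar t > r t then 1 else 0)
    (hr1 : r 1 ∈ Set.Icc 0 B)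
    (hupd : ∀ t, 1 ≤ t → R' (r (t + 1)) = R' (r t) - η t * (α - E t) * obs t / p t)
    (T : ℕ) (hT : 1 ≤ T) :
    |(1 / (T : ℝ)) * ∑ t ∈ Finset.Icc 1 T, (E t - α) * obs t / p t| ≤
      (1 / ((T : ℝ) * η T)) *
        (L * B + L * η 1 / (μ * ((Finset.Icc 1 T).inf' (Finset.nonempty_Icc.mpr hT) p))) := by
  obtain ⟨hα0, hα1⟩ := hα
  obtain ⟨pm, hpmdef⟩ : ∃ x : ℝ, x = (Finset.Icc 1 T).inf' (Finset.nonempty_Icc.mpr hT) p :=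
    ⟨_, rfl⟩
  rw [← hpmdef]
  have hpm_pos : 0 < pm := by
    rw [hpmdef, Finset.lt_inf'_iff]
    exact fun t _ => (hp t).1
  have hpm_le : ∀ t, 1 ≤ t → t ≤ T → pm ≤ p t := by
    intro t h1 h2
    rw [hpmdef]
    exact Finset.inf'_le p (Finset.mem_Icc.mpr ⟨h1, h2⟩)
  have hmp : 0 < μ * pm := mul_pos hμ hpm_pos
  have hL0 : 0 ≤ L := by
    have h := hLip 0 1
    have h2 : |(0:ℝ) - 1| = 1 := by norm_num
    rw [h2, mul_one] at h
    exact le_trans (abs_nonneg _) h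
  have key : ∀ x y, R' x ≤ R' y → x ≤ y ∧ μ * (y - x) ≤ R' y - R' x := by
    intro x y h
    have hxy : x ≤ y := by
      by_contra hc
      push_neg at hc
      have h1 := hsc x y
      have h2 : 0 < (x - y) ^ 2 := pow_pos (sub_pos.mpr hc) 2
      nlinarith [mul_nonneg (sub_nonneg.mpr h) (sub_pos.mpr hc).le]
    refine ⟨hxy, ?_⟩
    rcases eq_or_lt_of_le hxy with heq | hlt
    · subst heq; simpa using h
    · have h1 := hsc y x
      nlinarith [sub_pos.mpr hlt]
  have mono : ∀ x y, x ≤ y → R' x ≤ R' y := by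
    intro x y hxy
    by_contra hc
    push_neg at hc
    have h1 := (key y x hc.le).1
    have h2 : x = y := le_antisymm hxy h1
    rw [h2] at hc
    exact lt_irrefl _ hc
  have hηmono : ∀ t, 1 ≤ t → η t ≤ η 1 := by
    intro t ht
    induction t, ht using Nat.le_induction with
    | base => exact le_rfl
    | succ t ht ih => exact le_trans (hηdec t) ih
  obtain ⟨a, hadef⟩ : ∃ x : ℝ, x = -(η 1 * α / (μ * pm)) := ⟨_, rfl⟩
  obtain ⟨b, hbdef⟩ : ∃ x : ℝ, x = B + η 1 * (1 - α) / (μ * pm) := ⟨_, rfl⟩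
  have ha0 : a ≤ 0 := by
    rw [hadef]
    have : (0:ℝ) ≤ η 1 * α / (μ * pm) :=
      div_nonneg (mul_nonneg (hη 1).le hα0) hmp.le
    linarith
  have hBb : B ≤ b := by
    rw [hbdef]
    have : (0:ℝ) ≤ η 1 * (1 - α) / (μ * pm) :=
      div_nonneg (mul_nonneg (hη 1).le (by linarith)) hmp.le
    linarith
  have hab : a ≤ b := le_trans ha0 (le_trans hB.le hBb)
  -- iterates remain in [a, b]
  have hrange : ∀ t, 1 ≤ t → t ≤ T + 1 → r t ∈ Set.Icc a b := by
    intro t ht1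
    induction t, ht1 using Nat.le_induction with
    | base =>
      intro _
      exact ⟨le_trans ha0 hr1.1, le_trans hr1.2 hBb⟩
    | succ t ht ih =>
      intro htT1
      have htT : t ≤ T := by omega
      obtain ⟨hra, hrb⟩ := ih (by omega)
      have hupdt := hupd t ht
      have hpt := hpm_le t ht htT
      have hη1 : η t ≤ η 1 := hηmono t ht
      rcases hobs t with h0 | h1
      · have heq : R' (r (t + 1)) = R' (r t) := by rw [hupdt, h0]; ring
        have heq2 : r (t + 1) = r t := hbij.injective heq
        rw [heq2]
        exact ⟨hra, hrb⟩
      · by_cases hmc : rstar t > r t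
        · -- E t = 1 : threshold increases, bounded above
          have hEt : E t = 1 := by rw [hE t]; simp [hmc]
          have hRupd : R' (r (t + 1)) = R' (r t) + η t * (1 - α) / p t := by
            rw [hupdt, hEt, h1]; ring
          have hδ : (0:ℝ) ≤ η t * (1 - α) / p t :=
            div_nonneg (mul_nonneg (hη t).le (by linarith)) (hp t).1.le
          have hle : R' (r t) ≤ R' (r (t + 1)) := by rw [hRupd]; linarith
          obtain ⟨hle2, hmu⟩ := key _ _ hle
          have hΔ : 0 ≤ r (t + 1) - r t := by linarith
          have e1 : μ * (r (t + 1) - r t) ≤ η t * (1 - α) / p t := by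
            rw [hRupd] at hmu; linarith
          have e3 : μ * (r (t + 1) - r t) * p t ≤ η t * (1 - α) := by
            calc μ * (r (t + 1) - r t) * p t
                ≤ (η t * (1 - α) / p t) * p t :=
                  mul_le_mul_of_nonneg_right e1 (hp t).1.le
              _ = η t * (1 - α) := div_mul_cancel₀ _ (hp t).1.ne'
          have e4 : μ * pm * (r (t + 1) - r t) ≤ μ * (r (t + 1) - r t) * p t := by
            nlinarith [mul_nonneg hμ.le hΔ]
          have e5 : η t * (1 - α) ≤ η 1 * (1 - α) :=
            mul_le_mul_of_nonneg_right hη1 (by linarith)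
          have h5 : μ * pm * (r (t + 1) - r t) ≤ η 1 * (1 - α) := by linarith
          have hrB : r t ≤ B := le_trans hmc.le (hrstar t).2
          constructor
          · exact le_trans hra hle2
          · rw [hbdef, ← sub_le_iff_le_add', le_div_iff₀ hmp]
            nlinarith [mul_nonneg hmp.le (sub_nonneg.mpr hrB)]
        · -- E t = 0 : threshold decreases, bounded below
          have hEt : E t = 0 := by rw [hE t]; simp [hmc]
          have hRupd : R' (r (t + 1)) = R' (r t) - η t * α / p t := by
            rw [hupdt, hEt, h1]; ring
          have hδ : (0:ℝ) ≤ η t * α / p t :=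
            div_nonneg (mul_nonneg (hη t).le hα0) (hp t).1.le
          have hle : R' (r (t + 1)) ≤ R' (r t) := by rw [hRupd]; linarith
          obtain ⟨hle2, hmu⟩ := key _ _ hle
          have hΔ : 0 ≤ r t - r (t + 1) := by linarith
          have e1 : μ * (r t - r (t + 1)) ≤ η t * α / p t := by
            rw [hRupd] at hmu; linarith
          have e3 : μ * (r t - r (t + 1)) * p t ≤ η t * α := by
            calc μ * (r t - r (t + 1)) * p t
                ≤ (η t * α / p t) * p t :=
                  mul_le_mul_of_nonneg_right e1 (hp t).1.le
              _ = η t * α := div_mul_cancel₀ _ (hp t).1.ne'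
          have e4 : μ * pm * (r t - r (t + 1)) ≤ μ * (r t - r (t + 1)) * p t := by
            nlinarith [mul_nonneg hμ.le hΔ]
          have e5 : η t * α ≤ η 1 * α := mul_le_mul_of_nonneg_right hη1 hα0
          have h5 : μ * pm * (r t - r (t + 1)) ≤ η 1 * α := by linarith
          push_neg at hmc
          have hr0 : 0 ≤ r t := le_trans (hrstar t).1 hmc
          constructor
          · rw [hadef, neg_le, le_div_iff₀ hmp]
            nlinarith [mul_nonneg hmp.le hr0]
          · exact le_trans hle2 hrb
  -- midpoint and radius
  obtain ⟨c, hcdef⟩ : ∃ x : ℝ, x = (R' a + R' b) / 2 := ⟨_, rfl⟩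
  obtain ⟨M, hMdef⟩ : ∃ x : ℝ, x = (R' b - R' a) / 2 := ⟨_, rfl⟩
  have hM : ∀ t, 1 ≤ t → t ≤ T + 1 → |R' (r t) - c| ≤ M := by
    intro t h1 h2
    obtain ⟨hta, htb⟩ := hrange t h1 h2
    have h3 : R' a ≤ R' (r t) := mono a _ hta
    have h4 : R' (r t) ≤ R' b := mono _ b htb
    rw [abs_le]
    constructor <;> · rw [hcdef, hMdef]; linarith
  have hM0 : 0 ≤ M := le_trans (abs_nonneg _) (hM 1 le_rfl (by omega))
  have h2M : 2 * M ≤ L * B + L * η 1 / (μ * pm) := by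
    have h1 : R' b - R' a ≤ |R' b - R' a| := le_abs_self _
    have h2 := hLip b a
    have h3 : |b - a| = b - a := abs_of_nonneg (by linarith)
    have h4 : b - a = B + η 1 / (μ * pm) := by
      rw [hadef, hbdef]
      field_simp
      ring
    rw [h3, h4] at h2
    rw [hMdef]
    have h5 : L * (B + η 1 / (μ * pm)) = L * B + L * η 1 / (μ * pm) := by ring
    linarith
  -- each summand as a mirror increment
  have hterm : ∀ t, 1 ≤ t →
      (E t - α) * obs t / p t = (R' (r (t + 1)) - R' (r t)) / η t := by
    intro t ht
    rw [hupd t ht]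
    have h1 : η t ≠ 0 := (hη t).ne'
    have h2 : p t ≠ 0 := (hp t).1.ne'
    field_simp
    ring
  -- Abel-type bound by induction
  have habel : ∀ S, 1 ≤ S → S ≤ T →
      |(∑ t ∈ Finset.Icc 1 S, (E t - α) * obs t / p t) - (R' (r (S + 1)) - c) / η S| ≤
        M / η S := by
    intro S hS1
    induction S, hS1 using Nat.le_induction with
    | base =>
      intro _
      rw [Finset.Icc_self, Finset.sum_singleton, hterm 1 le_rfl]
      have heq : (R' (r (1 + 1)) - R' (r 1)) / η 1 - (R' (r (1 + 1)) - c) / η 1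
          = -((R' (r 1) - c) / η 1) := by ring
      rw [heq, abs_neg, abs_div, abs_of_pos (hη 1)]
      have h1 : |R' (r 1) - c| ≤ M := hM 1 le_rfl (by omega)
      exact div_le_div_of_nonneg_right h1 (hη 1).le
    | succ S hS ih =>
      intro hST
      have hST' : S ≤ T := by omega
      have ihb := ih hST'
      rw [Finset.sum_Icc_succ_top (by omega : 1 ≤ S + 1), hterm (S + 1) (by omega)]
      have hA : |R' (r (S + 1)) - c| ≤ M := hM (S + 1) (by omega) (by omega)
      have hinv : 1 / η S ≤ 1 / η (S + 1) :=
        one_div_le_one_div_of_le (hη (S + 1)) (hηdec S)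
      have h1 : η S ≠ 0 := (hη S).ne'
      have h2 : η (S + 1) ≠ 0 := (hη (S + 1)).ne'
      have heq : (∑ t ∈ Finset.Icc 1 S, (E t - α) * obs t / p t)
            + (R' (r (S + 1 + 1)) - R' (r (S + 1))) / η (S + 1)
            - (R' (r (S + 1 + 1)) - c) / η (S + 1)
          = ((∑ t ∈ Finset.Icc 1 S, (E t - α) * obs t / p t)
              - (R' (r (S + 1)) - c) / η S)
            + (R' (r (S + 1)) - c) * (1 / η S - 1 / η (S + 1)) := by
        field_simp
        ring
      rw [heq]
      calc |((∑ t ∈ Finset.Icc 1 S, (E t - α) * obs t / p t)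
              - (R' (r (S + 1)) - c) / η S)
            + (R' (r (S + 1)) - c) * (1 / η S - 1 / η (S + 1))|
          ≤ |(∑ t ∈ Finset.Icc 1 S, (E t - α) * obs t / p t)
              - (R' (r (S + 1)) - c) / η S|
            + |(R' (r (S + 1)) - c) * (1 / η S - 1 / η (S + 1))| := abs_add_le _ _
        _ ≤ M / η S + M * (1 / η (S + 1) - 1 / η S) := by
            have h3 : |(R' (r (S + 1)) - c) * (1 / η S - 1 / η (S + 1))|
                = |R' (r (S + 1)) - c| * (1 / η (S + 1) - 1 / η S) := by
              rw [abs_mul, abs_of_nonpos (sub_nonpos.mpr hinv), neg_sub]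
            rw [h3]
            have h4 : |R' (r (S + 1)) - c| * (1 / η (S + 1) - 1 / η S)
                ≤ M * (1 / η (S + 1) - 1 / η S) :=
              mul_le_mul_of_nonneg_right hA (by linarith)
            linarith
        _ = M / η (S + 1) := by
            rw [div_eq_mul_one_div, div_eq_mul_one_div]
            ring
  -- assemble
  have hfin := habel T hT le_rfl
  have hgT : |R' (r (T + 1)) - c| ≤ M := hM (T + 1) (by omega) le_rfl
  have hsum_bound : |∑ t ∈ Finset.Icc 1 T, (E t - α) * obs t / p t| ≤ 2 * M / η T := by
    have h1 : |(R' (r (T + 1)) - c) / η T| ≤ M / η T := by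
      rw [abs_div, abs_of_pos (hη T)]
      exact div_le_div_of_nonneg_right hgT (hη T).le
    calc |∑ t ∈ Finset.Icc 1 T, (E t - α) * obs t / p t|
        = |((∑ t ∈ Finset.Icc 1 T, (E t - α) * obs t / p t)
            - (R' (r (T + 1)) - c) / η T) + (R' (r (T + 1)) - c) / η T| := by
          rw [sub_add_cancel]
      _ ≤ |(∑ t ∈ Finset.Icc 1 T, (E t - α) * obs t / p t)
            - (R' (r (T + 1)) - c) / η T| + |(R' (r (T + 1)) - c) / η T| := abs_add_le _ _
      _ ≤ M / η T + M / η T := add_le_add hfin h1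
      _ = 2 * M / η T := by ring
  have hTpos : (0:ℝ) < (T : ℝ) := by exact_mod_cast Nat.pos_of_ne_zero (by omega)
  have hT1 : (0:ℝ) < 1 / (T : ℝ) := by positivity
  calc |1 / (T : ℝ) * ∑ t ∈ Finset.Icc 1 T, (E t - α) * obs t / p t|
      = 1 / (T : ℝ) * |∑ t ∈ Finset.Icc 1 T, (E t - α) * obs t / p t| := by
        rw [abs_mul, abs_of_pos hT1]
    _ ≤ 1 / (T : ℝ) * (2 * M / η T) :=
        mul_le_mul_of_nonneg_left hsum_bound hT1.le
    _ ≤ 1 / (T : ℝ) * ((L * B + L * η 1 / (μ * pm)) / η T) := by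
        exact mul_le_mul_of_nonneg_left (div_le_div_of_nonneg_right h2M (hη T).le) hT1.le
    _ = 1 / ((T : ℝ) * η T) * (L * B + L * η 1 / (μ * pm)) := by
        field_simp
end

section
/- Under the IM-OCP dynamics with nonincreasing step sizes η_t, for every u ∈ ℝ and every horizon T ≥ 1, the importance-weighted regret satisfies Σ_{t=1}^T ( ℓ_{1−α}(r_t, r*_t) − ℓ_{1−α}(u, r*_t) ) · obs_t/p_t ≤ (max_{1 ≤ t ≤ T} B_R(u, r_t))/η_T + (1/(2μ)) · Σ_{t=1}^T η_t · (obs_t/p_t)². This inequality holds deterministically for every choice of the binary sequence obs_t. -/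
/-!
Online mirror descent on the importance-weighted pinball losses. The pinball loss is convex in
its first argument with subgradient `α - 1{r < s}` at `r`, so the weighted regret of round `t` is
at most `g_t (r_t - u)` with `g_t = (α - E_t) obs_t / p_t`. The three-point identity for Bregman
divergences splits `η_t g_t (r_t - u)` into the drift `B_R(u, r_t) - B_R(u, r_{t+1})` and the
stability term `B_R(r_t, r_{t+1}) ≤ (η_t g_t)² / (2μ)`. Dividing by `η_t` and summing, the drift
terms telescope (Abel summation, using that `1/η_t` is nondecreasing) to at most
`max_t B_R(u, r_t) / η_T`, while `g_t² ≤ (obs_t / p_t)²`.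
-/

/-- The quantile (pinball) loss `ℓ_{1-α}(r, s) = (α - 1{r < s})(r - s)`. -/
noncomputable def pinball (α r s : ℝ) : ℝ := (α - if r < s then 1 else 0) * (r - s)

noncomputable def bregman (R R' : ℝ → ℝ) (u v : ℝ) : ℝ := R u - R v - R' v * (u - v)

section Bregman

variable {R R' : ℝ → ℝ} {μ : ℝ}

theorem bregman_add_bregman_swap (x y : ℝ) :
    bregman R R' x y + bregman R R' y x = (R' x - R' y) * (x - y) := by
  unfold bregman; ring

theorem bregman_three_point (u x y : ℝ) :
    (R' x - R' y) * (x - u) = bregman R R' u x - bregman R R' u y + bregman R R' x y := by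
  unfold bregman; ring

/-- `x ↦ R x - R' b * x - μ/2 (x - b)²` is convex with a critical point at `b`, hence minimal
there. -/
theorem half_mul_sq_le_bregman (hR : ∀ x, HasDerivAt R (R' x) x)
    (hsc : ∀ x y, (R' x - R' y) * (x - y) ≥ μ * (x - y) ^ 2) (a b : ℝ) :
    μ / 2 * (a - b) ^ 2 ≤ bregman R R' a b := by
  set φ : ℝ → ℝ := fun x => R x - R' b * x - μ / 2 * (x - b) ^ 2
  have hφ : ∀ x, HasDerivAt φ (R' x - R' b - μ * (x - b)) x := fun x => by
    refine (((hR x).sub ((hasDerivAt_id' x).const_mul (R' b))).sub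
      ((((hasDerivAt_id' x).sub_const b).pow 2).const_mul (μ / 2))).congr_deriv ?_
    push_cast; ring
  have hmono : Monotone (deriv φ) := fun x y hxy => by
    rw [(hφ x).deriv, (hφ y).deriv]
    rcases hxy.lt_or_eq with hlt | rfl
    · nlinarith [hsc y x]
    · rfl
  have hconv : ConvexOn ℝ Set.univ φ :=
    hmono.convexOn_univ_of_deriv fun x => (hφ x).differentiableAt
  have hcrit : derivWithin φ (Set.Ioi b) b = 0 := by
    rw [(hφ b).hasDerivWithinAt.derivWithin (uniqueDiffWithinAt_Ioi b)]; ring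
  have hmin := hconv.isMinOn_of_rightDeriv_eq_zero (by simp) hcrit (Set.mem_univ a)
  simp only [φ, sub_self, Set.mem_ofPred_eq] at hmin
  unfold bregman; linarith

/-- The stability term `B_R(x, x') = η g (x - x') - B_R(x', x) ≤ η g (x - x') - μ/2 (x - x')²`
is at most `(η g)² / (2μ)` by AM-GM. -/
theorem mirror_step_le (hR : ∀ x, HasDerivAt R (R' x) x)
    (hsc : ∀ x y, (R' x - R' y) * (x - y) ≥ μ * (x - y) ^ 2) (hμ : 0 < μ)
    {η g x x' : ℝ} (hη : 0 < η) (hupd : R' x' = R' x - η * g) (u : ℝ) :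
    g * (x - u) ≤ (bregman R R' u x - bregman R R' u x') / η + η * g ^ 2 / (2 * μ) := by
  have hdiff : R' x - R' x' = η * g := by linarith
  have hthree := bregman_three_point (R := R) (R' := R') u x x'
  have hswap := bregman_add_bregman_swap (R := R) (R' := R') x x'
  have hlow := half_mul_sq_le_bregman hR hsc x' x
  rw [hdiff] at hthree hswap
  have hstab : bregman R R' x x' ≤ (η * g) ^ 2 / (2 * μ) := by
    rw [le_div_iff₀ (by positivity)]
    nlinarith [sq_nonneg (η * g - μ * (x - x'))]
  rw [div_add' _ _ _ hη.ne', le_div_iff₀ hη]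
  have hscale : (η * g) ^ 2 / (2 * μ) = η * (η * g ^ 2 / (2 * μ)) := by ring
  linarith

end Bregman

theorem pinball_sub_pinball_le (α r s u : ℝ) :
    pinball α r s - pinball α u s ≤ (α - if r < s then 1 else 0) * (r - u) := by
  unfold pinball
  split_ifs <;> nlinarith

theorem sum_Icc_sub_div_le {D η : ℕ → ℝ} {M : ℝ} (hη : ∀ t, 0 < η t)
    (hηdec : ∀ t, η (t + 1) ≤ η t) {T : ℕ} (hT : 1 ≤ T) (hM : ∀ t ∈ Finset.Icc 1 T, D t ≤ M) :
    ∑ t ∈ Finset.Icc 1 T, (D t - D (t + 1)) / η t ≤ (M - D (T + 1)) / η T := by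
  induction T, hT using Nat.le_induction with
  | base =>
    simp only [Finset.Icc_self, Finset.sum_singleton]
    gcongr
    · exact (hη 1).le
    · exact hM 1 (by simp)
  | succ n hn ih =>
    have hMn : D (n + 1) ≤ M := hM _ (by simp)
    rw [Finset.sum_Icc_succ_top (by omega)]
    calc _ ≤ (M - D (n + 1)) / η n + (D (n + 1) - D (n + 1 + 1)) / η (n + 1) := by
          gcongr
          exact ih fun t ht => hM t (Finset.Icc_subset_Icc_right n.le_succ ht)
      _ ≤ (M - D (n + 1)) / η (n + 1) + (D (n + 1) - D (n + 1 + 1)) / η (n + 1) := by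
          gcongr ?_ + _
          exact div_le_div_of_nonneg_left (sub_nonneg.mpr hMn) (hη _) (hηdec n)
      _ = (M - D (n + 1 + 1)) / η (n + 1) := by ring

theorem pinball_regret_le_of_mirror_step {R R' : ℝ → ℝ} {μ : ℝ}
    (hR : ∀ x, HasDerivAt R (R' x) x)
    (hsc : ∀ x y, (R' x - R' y) * (x - y) ≥ μ * (x - y) ^ 2) (hμ : 0 < μ)
    {α η w x x' s : ℝ} (hα : α ∈ Set.Icc (0 : ℝ) 1) (hη : 0 < η) (hw : 0 ≤ w)
    (hupd : R' x' = R' x - η * ((α - if x < s then 1 else 0) * w)) (u : ℝ) :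
    (pinball α x s - pinball α u s) * w ≤
      (bregman R R' u x - bregman R R' u x') / η + 1 / (2 * μ) * (η * w ^ 2) := by
  have hgrad_sq : (α - if x < s then 1 else 0) ^ 2 ≤ 1 := by
    split_ifs <;> nlinarith [hα.1, hα.2]
  set e := α - if x < s then 1 else 0
  calc (pinball α x s - pinball α u s) * w ≤ e * (x - u) * w :=
        mul_le_mul_of_nonneg_right (pinball_sub_pinball_le α x s u) hw
    _ = e * w * (x - u) := by ring
    _ ≤ (bregman R R' u x - bregman R R' u x') / η + η * (e * w) ^ 2 / (2 * μ) :=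
        mirror_step_le hR hsc hμ hη hupd u
    _ = (bregman R R' u x - bregman R R' u x') / η + 1 / (2 * μ) * (η * w ^ 2) * e ^ 2 := by
        ring
    _ ≤ (bregman R R' u x - bregman R R' u x') / η + 1 / (2 * μ) * (η * w ^ 2) := by
        gcongr _ + ?_
        exact mul_le_of_le_one_right (by positivity) hgrad_sq

theorem imocp_weighted_regret_bound_general
    (α μ : ℝ) (hα : α ∈ Set.Icc (0 : ℝ) 1) (hμ : 0 < μ)
    (rstar η p obs : ℕ → ℝ)
    (hη : ∀ t, 0 < η t)
    (hηdec : ∀ t, η (t + 1) ≤ η t)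
    (hp : ∀ t, p t ∈ Set.Ioc (0 : ℝ) 1)
    (hobs : ∀ t, obs t = 0 ∨ obs t = 1)
    (R R' : ℝ → ℝ)
    (hR : ∀ x, HasDerivAt R (R' x) x)
    (hsc : ∀ x y, (R' x - R' y) * (x - y) ≥ μ * (x - y) ^ 2)
    (r E : ℕ → ℝ)
    (hE : ∀ t, E t = if rstar t > r t then 1 else 0)
    (hupd : ∀ t, 1 ≤ t → R' (r (t + 1)) = R' (r t) - η t * (α - E t) * obs t / p t)
    (u : ℝ) (T : ℕ) (hT : 1 ≤ T) :
    ∑ t ∈ Finset.Icc 1 T, (pinball α (r t) (rstar t) - pinball α u (rstar t)) * obs t / p t ≤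
      ((Finset.Icc 1 T).sup' (Finset.nonempty_Icc.mpr hT)
          (fun t => R u - R (r t) - R' (r t) * (u - r t))) / η T +
        (1 / (2 * μ)) * ∑ t ∈ Finset.Icc 1 T, η t * (obs t / p t) ^ 2 := by
  have hround : ∀ t ∈ Finset.Icc 1 T,
      (pinball α (r t) (rstar t) - pinball α u (rstar t)) * obs t / p t ≤
        (bregman R R' u (r t) - bregman R R' u (r (t + 1))) / η t +
          1 / (2 * μ) * (η t * (obs t / p t) ^ 2) := by
    intro t ht
    have hw : 0 ≤ obs t / p t :=
      div_nonneg (by rcases hobs t with h | h <;> simp [h]) (hp t).1.le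
    rw [mul_div_assoc]
    refine pinball_regret_le_of_mirror_step hR hsc hμ hα (hη t) hw ?_ u
    rw [hupd t (Finset.mem_Icc.mp ht).1, hE t]
    ring
  have htelescope := sum_Icc_sub_div_le hη hηdec hT
    (M := (Finset.Icc 1 T).sup' (Finset.nonempty_Icc.mpr hT) fun t => bregman R R' u (r t))
    fun t ht => Finset.le_sup' (fun t => bregman R R' u (r t)) ht
  have hlast : 0 ≤ bregman R R' u (r (T + 1)) :=
    (by positivity : 0 ≤ μ / 2 * (u - r (T + 1)) ^ 2).trans (half_mul_sq_le_bregman hR hsc _ _)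
  calc _ ≤ ∑ t ∈ Finset.Icc 1 T, ((bregman R R' u (r t) - bregman R R' u (r (t + 1))) / η t +
          1 / (2 * μ) * (η t * (obs t / p t) ^ 2)) := Finset.sum_le_sum hround
    _ = ∑ t ∈ Finset.Icc 1 T, (bregman R R' u (r t) - bregman R R' u (r (t + 1))) / η t +
          1 / (2 * μ) * ∑ t ∈ Finset.Icc 1 T, η t * (obs t / p t) ^ 2 := by
        rw [Finset.sum_add_distrib, Finset.mul_sum]
    _ ≤ _ := by
        gcongr
        exact htelescope.trans (div_le_div_of_nonneg_right (sub_le_self _ hlast) (hη T).le)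

/-- Deterministic importance-weighted regret bound for IM-OCP (online mirror descent):
for every comparator `u`,
`Σ_{t=1}^T (ℓ(r_t, r*_t) - ℓ(u, r*_t)) obs_t/p_t ≤ (max_t B_R(u, r_t))/η_T
  + (1/(2μ)) Σ_{t=1}^T η_t (obs_t/p_t)²`. -/
theorem imocp_weighted_regret_bound
    (B α μ : ℝ) (hB : 0 < B) (hα : α ∈ Set.Icc (0 : ℝ) 1) (hμ : 0 < μ)
    (rstar η p obs : ℕ → ℝ)
    (hrstar : ∀ t, rstar t ∈ Set.Icc 0 B)
    (hη : ∀ t, 0 < η t)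
    (hηdec : ∀ t, η (t + 1) ≤ η t)
    (hp : ∀ t, p t ∈ Set.Ioc (0 : ℝ) 1)
    (hobs : ∀ t, obs t = 0 ∨ obs t = 1)
    (R R' : ℝ → ℝ)
    (hR : ∀ x, HasDerivAt R (R' x) x)
    (hbij : Function.Bijective R')
    (hsc : ∀ x y, (R' x - R' y) * (x - y) ≥ μ * (x - y) ^ 2)
    (r E : ℕ → ℝ)
    (hE : ∀ t, E t = if rstar t > r t then 1 else 0)
    (hr1 : r 1 ∈ Set.Icc 0 B)
    (hupd : ∀ t, 1 ≤ t → R' (r (t + 1)) = R' (r t) - η t * (α - E t) * obs t / p t)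
    (u : ℝ) (T : ℕ) (hT : 1 ≤ T) :
    ∑ t ∈ Finset.Icc 1 T, (pinball α (r t) (rstar t) - pinball α u (rstar t)) * obs t / p t ≤
      ((Finset.Icc 1 T).sup' (Finset.nonempty_Icc.mpr hT)
          (fun t => R u - R (r t) - R' (r t) * (u - r t))) / η T +
        (1 / (2 * μ)) * ∑ t ∈ Finset.Icc 1 T, η t * (obs t / p t) ^ 2 :=
  imocp_weighted_regret_bound_general α μ hα hμ rstar η p obs hη hηdec hp hobs R R' hR hsc r E hE
    hupd u T hT
end

section
/- Let α ∈ [0,1], B > 0, σ > 0, and let P : ℝ → ℝ be a nonnegative integrable function supported on [0,B] with ∫_0^B P(s) ds = 1 and P(s) ≤ M for almost every s. Then the derivative R' of the regularizer R(r) = ∫_0^B ℓ_{1−α}(r, s)·P(s) ds + (σ/2)·r² is Lipschitz on ℝ with Lipschitz constant at most M + σ; in particular R is (M + σ)-smooth. -/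
open MeasureTheory Set

theorem norm_integral_Iic_sub_integral_Iic_le {E : Type*} [NormedAddCommGroup E]
    [NormedSpace ℝ E] {f : ℝ → E} {C : ℝ} (hf : Integrable f) (hC : ∀ᵐ s, ‖f s‖ ≤ C)
    (x y : ℝ) : ‖(∫ s in Iic x, f s) - ∫ s in Iic y, f s‖ ≤ C * |x - y| := by
  rw [intervalIntegral.integral_Iic_sub_Iic hf.integrableOn hf.integrableOn]
  exact intervalIntegral.norm_integral_le_of_norm_le_const_ae (hC.mono fun s hs _ => hs)

theorem regularizer_derivative_lipschitz_general
    (α B σ M : ℝ) (hσ : 0 < σ)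
    (P : ℝ → ℝ)
    (hPnonneg : ∀ s, 0 ≤ P s)
    (hPint : MeasureTheory.IntegrableOn P (Set.Icc 0 B))
    (hPsupp : ∀ s, s ∉ Set.Icc (0 : ℝ) B → P s = 0)
    (hPbdd : ∀ᵐ s ∂MeasureTheory.volume, P s ≤ M)
    (F : ℝ → ℝ) (hF : ∀ r, F r = ∫ s in Set.Iic r, P s)
    (R' : ℝ → ℝ) (hR' : ∀ r, R' r = F r - (1 - α) + σ * r) :
    ∀ x y : ℝ, |R' x - R' y| ≤ (M + σ) * |x - y| := by
  intro x y
  have hP : Integrable P := hPint.integrable_of_forall_notMem_eq_zero hPsupp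
  have hPnorm : ∀ᵐ s, ‖P s‖ ≤ M :=
    hPbdd.mono fun s hs => by rwa [Real.norm_of_nonneg (hPnonneg s)]
  have hF_lip : |F x - F y| ≤ M * |x - y| := by
    simpa only [hF, Real.norm_eq_abs] using norm_integral_Iic_sub_integral_Iic_le hP hPnorm x y
  calc |R' x - R' y| = |(F x - F y) + σ * (x - y)| := by rw [hR', hR']; congr 1; ring
    _ ≤ |F x - F y| + σ * |x - y| :=
      (abs_add_le _ _).trans_eq (by rw [abs_mul, abs_of_pos hσ])
    _ ≤ (M + σ) * |x - y| := by linarith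

/-- If the prior density `P` on `[0, B]` is bounded a.e. by `M`, then the derivative
`R'(r) = F(r) - (1 - α) + σ r` of the IM-OCP regularizer
`R(r) = ∫_0^B ℓ_{1-α}(r, s) P(s) ds + (σ/2) r²` is Lipschitz with constant at most
`M + σ`; in particular `R` is `(M + σ)`-smooth. -/
theorem regularizer_derivative_lipschitz
    (α B σ M : ℝ) (hα : α ∈ Set.Icc (0 : ℝ) 1) (hB : 0 < B) (hσ : 0 < σ)
    (P : ℝ → ℝ)
    (hPnonneg : ∀ s, 0 ≤ P s)
    (hPint : MeasureTheory.IntegrableOn P (Set.Icc 0 B))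
    (hPsupp : ∀ s, s ∉ Set.Icc (0 : ℝ) B → P s = 0)
    (hP1 : ∫ s in (0 : ℝ)..B, P s = 1)
    (hPbdd : ∀ᵐ s ∂MeasureTheory.volume, P s ≤ M)
    (F : ℝ → ℝ) (hF : ∀ r, F r = ∫ s in Set.Iic r, P s)
    (R' : ℝ → ℝ) (hR' : ∀ r, R' r = F r - (1 - α) + σ * r) :
    ∀ x y : ℝ, |R' x - R' y| ≤ (M + σ) * |x - y| :=
  regularizer_derivative_lipschitz_general α B σ M hσ P hPnonneg hPint hPsupp hPbdd F hF R' hR'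
end
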